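/- For κ ∈ {0,1} and n ≥ 1, let e_κ(x) ∈ ℝⁿ have entries x^{κ+2j−2} e^{−x²/2} for j = 1,...,n, where for κ = −1 the first entry is replaced by η_{−1}(x) = −√(π/2)·erf(x/√2). Then for x₁ ≤ x₂ ≤ ... ≤ x_{n+1}, the iterated integral ∫_{x₁}^{x₂}dξ₁ ⋯ ∫_{x_n}^{x_{n+1}}dξ_n det(e_κ(ξ₁), ..., e_κ(ξ_n)) equals the (n+1)×(n+1) determinant whose first n rows are e_{κ−1}(x₁), ..., e_{κ−1}(x_{n+1}) (as columns) and whose last row is all ones. -/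

import Mathlib

open Finset Matrix MeasureTheory

/-- The error function `erf x = (2/√π) ∫₀ˣ e^{-t²} dt`. -/
noncomputable def erf (x : ℝ) : ℝ :=
  (2 / Real.sqrt Real.pi) * ∫ t in (0 : ℝ)..x, Real.exp (-t ^ 2)

/-- The vector `e_κ(x) ∈ ℝⁿ` with entries `x^{κ+2j-2} e^{-x²/2}` (`j = 1,…,n`),
where for `κ = -1` the first entry is replaced by `η₋₁(x) = -√(π/2)·erf(x/√2)`. -/
noncomputable def eVec (κ : ℤ) (n : ℕ) (x : ℝ) : Fin n → ℝ := fun j =>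
  if κ = -1 ∧ (j : ℕ) = 0 then -(Real.sqrt (Real.pi / 2)) * erf (x / Real.sqrt 2)
  else x ^ (κ + 2 * (j : ℤ)) * Real.exp (-x ^ 2 / 2)

/-! The recursion `∫ ξ^(p+1) e^(-ξ²/2) = -ξ^p e^(-ξ²/2) + p ∫ ξ^(p-1) e^(-ξ²/2)`, started from
`η₋₁' = -e^(-ξ²/2)`, yields antiderivatives `F_j` of the entries of `e_κ` with
`F_j = -(e_{κ-1})_j + c_j F_{j-1}`. The integrand is an alternating sum of products of functions
of separate variables, so the integral is `det (F_j(x_{i+1}) - F_j(x_i))`. Row operations undoing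
the recursion turn this into `(-1)^n det ((e_{κ-1})_j(x_{i+1}) - (e_{κ-1})_j(x_i))`, which is also
what subtracting adjacent columns of the bordered matrix and expanding along its row of ones
gives. -/

theorem MeasureTheory.integral_univ_pi_det {ι α 𝕜 : Type*} [Fintype ι] [DecidableEq ι]
    [RCLike 𝕜] [MeasureSpace α] [SigmaFinite (volume : Measure α)]
    (g : ι → α → 𝕜) (s : ι → Set α) (hg : ∀ i j, IntegrableOn (g j) (s i)) :
    ∫ ξ in Set.univ.pi s, (of fun j i => g j (ξ i)).det =
      (of fun j i => ∫ t in s i, g j t).det := by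
  rw [volume_pi, Measure.restrict_pi_pi]
  simp only [det_apply', of_apply]
  rw [integral_finsetSum _ fun σ _ =>
    (Integrable.fintype_prod fun i => (hg i (σ i)).integrable).const_mul _]
  refine sum_congr rfl fun σ _ => ?_
  rw [integral_const_mul, integral_fintype_prod_eq_prod (fun i => g (σ i))]

theorem Matrix.det_last_row_ones {R : Type*} [CommRing R] {n : ℕ} (v : Fin n → Fin (n + 1) → R) :
    (of fun j i : Fin (n + 1) => if h : (j : ℕ) < n then v ⟨j, h⟩ i else 1).det =
      (-1) ^ n * (of fun j i : Fin n => v j i.succ - v j i.castSucc).det := by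
  set A : Matrix (Fin (n + 1)) (Fin (n + 1)) R :=
    of fun j i => if h : (j : ℕ) < n then v ⟨j, h⟩ i else 1
  have hA_last : ∀ i, A (Fin.last n) i = 1 := fun i => by simp [A]
  have hA_castSucc : ∀ j i, A j.castSucc i = v j i := fun j i => by simp [A]
  let B : Matrix (Fin (n + 1)) (Fin (n + 1)) R :=
    of fun j => Fin.cases (A j 0) fun i => A j i.succ - A j i.castSucc
  have hAB : A.det = B.det :=
    det_eq_of_forall_col_eq_smul_add_pred (fun _ => 1) (fun _ => rfl) fun _ _ => by simp [B]
  rw [hAB, det_succ_row B (Fin.last n), Fintype.sum_eq_single 0 fun i hi => ?_]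
  · simp [B, hA_last, hA_castSucc, submatrix]
  · obtain ⟨i, rfl⟩ := Fin.exists_succ_eq.mpr hi
    simp [B, hA_last]

open Real

-- `eVec κ n x j` unfolds to `eEntry κ j x`.
noncomputable def eEntry (κ : ℤ) (j : ℕ) (x : ℝ) : ℝ :=
  if κ = -1 ∧ j = 0 then -√(π / 2) * erf (x / √2) else x ^ (κ + 2 * (j : ℤ)) * exp (-x ^ 2 / 2)

theorem eEntry_of_eq_natCast {κ : ℤ} {j p : ℕ} (h : κ + 2 * j = p) :
    eEntry κ j = fun x => x ^ p * exp (-x ^ 2 / 2) := by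
  ext x
  rw [eEntry, if_neg (by omega), h, zpow_natCast]

theorem hasDerivAt_erf (x : ℝ) : HasDerivAt erf (2 / √π * exp (-x ^ 2)) x :=
  ((continuous_exp.comp (continuous_pow 2).neg).integral_hasStrictDerivAt 0 x).hasDerivAt.const_mul _

theorem hasDerivAt_exp_neg_sq_div_two (x : ℝ) :
    HasDerivAt (fun t => exp (-t ^ 2 / 2)) (-x * exp (-x ^ 2 / 2)) x := by
  have h := ((hasDerivAt_pow 2 x).neg.div_const 2).exp
  refine h.congr_deriv ?_
  simp only [Pi.neg_apply]
  ring

theorem hasDerivAt_pow_mul_exp_neg_sq_div_two (p : ℕ) (x : ℝ) :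
    HasDerivAt (fun t => t ^ (p + 1) * exp (-t ^ 2 / 2))
      ((p + 1) * (x ^ p * exp (-x ^ 2 / 2)) - x ^ (p + 2) * exp (-x ^ 2 / 2)) x := by
  refine ((hasDerivAt_pow (p + 1) x).mul (hasDerivAt_exp_neg_sq_div_two x)).congr_deriv ?_
  push_cast
  ring

theorem hasDerivAt_eEntry_neg_one_zero (x : ℝ) :
    HasDerivAt (eEntry (-1) 0) (-exp (-x ^ 2 / 2)) x := by
  have h := ((hasDerivAt_erf (x / √2)).comp x ((hasDerivAt_id x).div_const √2)).const_mul
    (-√(π / 2))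
  refine (h.congr_deriv ?_).congr_of_eventuallyEq (.of_forall fun t => by simp [eEntry])
  rw [div_pow, Real.sq_sqrt zero_le_two, Real.sqrt_div' _ zero_le_two]
  field_simp
  rw [Real.sq_sqrt zero_le_two]

noncomputable def eAntideriv (κ : ℤ) : ℕ → ℝ → ℝ
  | 0 => fun x => -eEntry (κ - 1) 0 x
  | j + 1 => fun x => -eEntry (κ - 1) (j + 1) x + (κ + 2 * j + 1) * eAntideriv κ j x

theorem hasDerivAt_eAntideriv {κ : ℤ} (hκ : κ = 0 ∨ κ = 1) (j : ℕ) (x : ℝ) :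
    HasDerivAt (eAntideriv κ j) (eEntry κ j x) x := by
  induction j with
  | zero =>
    rcases hκ with rfl | rfl
    · rw [eEntry_of_eq_natCast (p := 0) (by simp)]
      exact (hasDerivAt_eEntry_neg_one_zero x).neg.congr_deriv (by simp)
    · have h : eAntideriv 1 0 = fun t => -exp (-t ^ 2 / 2) := by
        ext t; simp [eAntideriv, eEntry]
      rw [h, eEntry_of_eq_natCast (p := 1) (by simp)]
      exact (hasDerivAt_exp_neg_sq_div_two x).neg.congr_deriv (by ring)
  | succ j ih =>
    lift κ to ℕ using (by omega)
    have h := (hasDerivAt_pow_mul_exp_neg_sq_div_two (κ + 2 * j) x).neg.add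
      (ih.const_mul ((κ : ℝ) + 2 * j + 1))
    rw [eEntry_of_eq_natCast (p := κ + 2 * j) (by simp)] at h
    rw [eEntry_of_eq_natCast (p := κ + 2 * j + 2) (by push_cast; ring)]
    rw [eAntideriv, eEntry_of_eq_natCast (p := κ + 2 * j + 1) (by push_cast; ring)]
    refine h.congr_deriv ?_
    push_cast
    ring

theorem continuous_eEntry {κ : ℤ} (hκ : 0 ≤ κ) (j : ℕ) : Continuous (eEntry κ j) := by
  lift κ to ℕ using hκ
  rw [eEntry_of_eq_natCast (p := κ + 2 * j) (by simp)]
  fun_prop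

theorem integral_Icc_eEntry {κ : ℤ} (hκ : κ = 0 ∨ κ = 1) (j : ℕ) {a b : ℝ} (hab : a ≤ b) :
    ∫ t in Set.Icc a b, eEntry κ j t = eAntideriv κ j b - eAntideriv κ j a := by
  rw [integral_Icc_eq_integral_Ioc, ← intervalIntegral.integral_of_le hab]
  exact intervalIntegral.integral_eq_sub_of_hasDerivAt (fun t _ => hasDerivAt_eAntideriv hκ j t)
    ((continuous_eEntry (by omega) j).intervalIntegrable a b)

theorem det_eAntideriv_sub (κ : ℤ) {n : ℕ} (a b : Fin n → ℝ) :
    (of fun j i : Fin n => eAntideriv κ j (b i) - eAntideriv κ j (a i)).det =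
      (-1) ^ n * (of fun j i : Fin n => eEntry (κ - 1) j (b i) - eEntry (κ - 1) j (a i)).det := by
  cases n with
  | zero => simp
  | succ n =>
    calc _ = (-of fun j i : Fin (n + 1) =>
          eEntry (κ - 1) j (b i) - eEntry (κ - 1) j (a i)).det :=
          det_eq_of_forall_row_eq_smul_add_pred (fun j => κ + 2 * j + 1)
            (fun i => by simp only [of_apply, Matrix.neg_apply, Fin.val_zero, eAntideriv]; ring)
            (fun j i => by simp only [of_apply, Matrix.neg_apply, Fin.val_succ, Fin.val_castSucc,
              eAntideriv]; ring)
      _ = _ := by rw [det_neg, Fintype.card_fin]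

/-- For `κ ∈ {0,1}` and `x₁ ≤ … ≤ x_{n+1}`, the iterated integral
`∫_{x₁}^{x₂}dξ₁ ⋯ ∫_{x_n}^{x_{n+1}}dξ_n det(e_κ(ξ₁),…,e_κ(ξ_n))`
equals the `(n+1)×(n+1)` determinant with columns `e_{κ-1}(x_i)` bordered below by
a row of ones. -/
theorem iterated_integral_det (κ : ℤ) (hκ : κ = 0 ∨ κ = 1) (n : ℕ)
    (x : Fin (n + 1) → ℝ) (hx : Monotone x) :
    (∫ ξ : Fin n → ℝ in
        Set.univ.pi (fun i : Fin n => Set.Icc (x i.castSucc) (x i.succ)),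
        (Matrix.of fun j i : Fin n => eVec κ n (ξ i) j).det) =
      (Matrix.of fun j i : Fin (n + 1) =>
          if h : (j : ℕ) < n then eVec (κ - 1) n (x i) ⟨(j : ℕ), h⟩ else 1).det := by
  calc _ = (of fun j i : Fin n => ∫ t in Set.Icc (x i.castSucc) (x i.succ), eEntry κ j t).det :=
        integral_univ_pi_det (fun j : Fin n => eEntry κ j) _ fun _ j =>
          (continuous_eEntry (by omega) j).integrableOn_Icc
    _ = (of fun j i : Fin n => eAntideriv κ j (x i.succ) - eAntideriv κ j (x i.castSucc)).det := by
        congr 1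
        ext j i
        exact integral_Icc_eEntry hκ j (hx (Fin.castSucc_lt_succ (i := i)).le)
    _ = (-1) ^ n * (of fun j i : Fin n =>
          eEntry (κ - 1) j (x i.succ) - eEntry (κ - 1) j (x i.castSucc)).det :=
        det_eAntideriv_sub κ _ _
    _ = _ := (det_last_row_ones fun j i => eVec (κ - 1) n (x i) j).symm
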